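/- Let k be a field, G a finite group, R a fully G-graded k-algebra, K and H subgroups of G, and g ∈ G. Write ᵍH := gHg⁻¹. Then the map induced by multiplication in R gives an isomorphism R_K ⊗_{R_{[K ∩ ᵍH]}} R_{[gH]} ≅ R_{[KgH]} of R_K–R_H-bimodules, where KgH denotes the double coset {tgz : t ∈ K, z ∈ H}; in particular the k-linear map r₁ ⊗ r₂ ↦ r₁r₂ from R_K ⊗_{R_{[K ∩ ᵍH]}} R_{[gH]} to R_{[KgH]} is bijective. -/

import Mathlib

/-!
Formalization of statements about fully group-graded algebras
(Coconeț–Todea, "Hochschild cohomology of fully group-graded algebras as Mackey functor").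
-/

set_option linter.unusedSectionVars false

open scoped Pointwise TensorProduct

/-- A fully (= strongly) `G`-graded `k`-algebra structure on `R`: a family of `k`-subspaces
`𝒜 g` (`g ∈ G`) giving an internal direct sum decomposition `R = ⊕_{g ∈ G} R_g`, with the
unit of `R` lying in the identity component, and satisfying `R_g · R_h = R_{gh}` for all
`g, h ∈ G`. -/
structure IsFullyGraded {k G R : Type*} [Field k] [Group G] [DecidableEq G]
    [Ring R] [Algebra k R] (𝒜 : G → Submodule k R) : Prop where
  internal : DirectSum.IsInternal 𝒜
  one_mem : (1 : R) ∈ 𝒜 1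
  mul_eq : ∀ g h : G, 𝒜 g * 𝒜 h = 𝒜 (g * h)

variable {k G R : Type*} [Field k] [Group G] [DecidableEq G] [Ring R] [Algebra k R]

/-- For a subset `S ⊆ G`, the `k`-subspace `R_{[S]} = ⊕_{s ∈ S} R_s` of `R`. -/
def gradedPart (𝒜 : G → Submodule k R) (S : Set G) : Submodule k R :=
  ⨆ s : S, 𝒜 (s : G)

theorem le_gradedPart (𝒜 : G → Submodule k R) {S : Set G} {s : G} (hs : s ∈ S) :
    𝒜 s ≤ gradedPart 𝒜 S :=
  le_iSup (fun t : S => 𝒜 (t : G)) ⟨s, hs⟩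

theorem gradedPart_mono (𝒜 : G → Submodule k R) {S T : Set G} (hST : S ⊆ T) :
    gradedPart 𝒜 S ≤ gradedPart 𝒜 T :=
  iSup_le fun s => le_gradedPart 𝒜 (hST s.2)

theorem gradedPart_mul_le (𝒜 : G → Submodule k R)
    (hmul : ∀ g h : G, 𝒜 g * 𝒜 h ≤ 𝒜 (g * h)) (S T : Set G) :
    gradedPart 𝒜 S * gradedPart 𝒜 T ≤ gradedPart 𝒜 (S * T) := by
  rw [gradedPart, Submodule.iSup_mul]
  refine iSup_le fun s => ?_
  rw [gradedPart, Submodule.mul_iSup]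
  refine iSup_le fun t => ?_
  exact le_trans (hmul s t) (le_gradedPart 𝒜 (Set.mul_mem_mul s.2 t.2))

/-- The conjugate subgroup `ᵍH = g H g⁻¹` (an element `x` lies in it iff `g⁻¹ x g ∈ H`). -/
def conjSubgroup (g : G) (H : Subgroup G) : Subgroup G where
  carrier := {x : G | g⁻¹ * x * g ∈ H}
  one_mem' := by simp [H.one_mem]
  mul_mem' {a b} ha hb := by
    have h1 : (g⁻¹ * a * g) * (g⁻¹ * b * g) ∈ H := H.mul_mem ha hb
    rwa [show (g⁻¹ * a * g) * (g⁻¹ * b * g) = g⁻¹ * (a * b) * g by group] at h1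
  inv_mem' {a} ha := by
    have h1 : (g⁻¹ * a * g)⁻¹ ∈ H := H.inv_mem ha
    rwa [show (g⁻¹ * a * g)⁻¹ = g⁻¹ * a⁻¹ * g by group] at h1

theorem mem_conjSubgroup (g : G) (H : Subgroup G) (x : G) :
    x ∈ conjSubgroup g H ↔ g⁻¹ * x * g ∈ H := Iff.rfl

theorem conjSubgroup_coe (g : G) (H : Subgroup G) :
    (conjSubgroup g H : Set G) = {g} * (H : Set G) * {g⁻¹} := by
  ext x
  simp only [SetLike.mem_coe, mem_conjSubgroup, Set.mem_mul, Set.mem_singleton_iff]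
  constructor
  · intro hx
    refine ⟨g * (g⁻¹ * x * g), ⟨g, rfl, g⁻¹ * x * g, hx, rfl⟩, g⁻¹, rfl, by group⟩
  · rintro ⟨y, ⟨a, ha, b, hb, hy⟩, c, hc, hx⟩
    rw [← hx, ← hy, ha, hc]
    have h2 : g⁻¹ * (g * b * g⁻¹) * g = b := by group
    rwa [h2]

/-- The `k`-linear map `↥A ⊗[k] ↥B → R` induced by multiplication in `R`. -/
noncomputable def mulTensor (A B : Submodule k R) : (↥A ⊗[k] ↥B) →ₗ[k] R :=
  TensorProduct.lift
    (LinearMap.mk₂ k (fun (a : ↥A) (b : ↥B) => (a : R) * (b : R))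
      (fun a₁ a₂ b => by simp [add_mul])
      (fun c a b => by simp [smul_mul_assoc])
      (fun a b₁ b₂ => by simp [mul_add])
      (fun c a b => by simp [mul_smul_comm]))

@[simp] theorem mulTensor_tmul (A B : Submodule k R) (a : ↥A) (b : ↥B) :
    mulTensor A B (a ⊗ₜ[k] b) = (a : R) * (b : R) := rfl

/-- The `k`-submodule of `↥A ⊗[k] ↥B` spanned by the balancedness relations over a middle
`k`-submodule `D` of `R` (with `D` acting by multiplication in `R`): the corresponding
quotient is the balanced tensor product `A ⊗_D B`. -/
noncomputable def balancedRel (A B D : Submodule k R) : Submodule k (↥A ⊗[k] ↥B) :=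
  Submodule.span k
    {z : ↥A ⊗[k] ↥B | ∃ (a : ↥A) (d : ↥D) (b : ↥B) (a' : ↥A) (b' : ↥B),
      (a' : R) = (a : R) * (d : R) ∧ ((b' : R) = (d : R) * (b : R)) ∧
      z = a' ⊗ₜ[k] b - a ⊗ₜ[k] b'}

/-- The balanced tensor product `A ⊗_D B`, realised as a quotient of `↥A ⊗[k] ↥B`. -/
noncomputable abbrev balancedTensor (A B D : Submodule k R) : Type _ :=
  @HasQuotient.Quotient (↥A ⊗[k] ↥B) (Submodule k (↥A ⊗[k] ↥B))
    (Submodule.hasQuotient (R := k) (M := ↥A ⊗[k] ↥B)) (balancedRel A B D)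

/-- The `k`-linear map `A ⊗_D B → R`, `r₁ ⊗ r₂ ↦ r₁ r₂`, induced by multiplication in `R`
on the balanced tensor product. -/
noncomputable def mulQuot (A B D : Submodule k R) : balancedTensor A B D →ₗ[k] R :=
  (Submodule.liftQ (R := k) (M := ↥A ⊗[k] ↥B) (balancedRel A B D) (mulTensor A B)
    (by
      rw [balancedRel, Submodule.span_le]
      rintro z ⟨a, d, b, a', b', ha', hb', rfl⟩
      simp only [SetLike.mem_coe, LinearMap.mem_ker, map_sub, mulTensor_tmul, ha', hb']
      rw [mul_assoc, sub_self]) :)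

/-!
Multiplication maps `R_K ⊗ R_{[gH]}` onto `R_{[KgH]}` because `R_{tgh} = R_t R_{gh}`. For
injectivity we build a left inverse `R → R_K ⊗_{R_{[K ∩ ᵍH]}} R_{[gH]}` one homogeneous component
at a time: for `x = t y₀` with `t ∈ K` and `y₀ ∈ gH`, write `1 = ∑ uᵢ vᵢ` with `uᵢ ∈ R_t`,
`vᵢ ∈ R_{t⁻¹}`, and send `c ∈ R_x` to `∑ uᵢ ⊗ vᵢ c`. If `c = a b` with `a ∈ R_s`, `b ∈ R_y`,
`s ∈ K`, `y ∈ gH` and `s y = x`, then `vᵢ a` has degree `t⁻¹ s = y₀ y⁻¹ ∈ K ∩ ᵍH`, so it moves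
across the tensor sign and the sum collapses to `(∑ uᵢ vᵢ) a ⊗ b = a ⊗ b`.
-/

theorem DirectSum.IsInternal.exists_linearMap_apply_coe {ι S M N : Type*} [DecidableEq ι]
    [Semiring S] [AddCommMonoid M] [Module S M] [AddCommMonoid N] [Module S N]
    {A : ι → Submodule S M} (h : DirectSum.IsInternal A) (φ : ∀ i, A i →ₗ[S] N) :
    ∃ Ψ : M →ₗ[S] N, ∀ i (x : A i), Ψ x = φ i x := by
  refine ⟨DirectSum.toModule S ι N φ ∘ₗ
    (LinearEquiv.ofBijective (DirectSum.coeLinearMap A) h).symm.toLinearMap, fun i x => ?_⟩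
  have hx : (LinearEquiv.ofBijective (DirectSum.coeLinearMap A) h).symm (x : M) =
      DirectSum.lof S ι (fun i => A i) i x := by
    rw [LinearEquiv.symm_apply_eq]
    exact (DirectSum.coeLinearMap_of A i x).symm
  simp [hx]

namespace IsFullyGraded

variable {𝒜 : G → Submodule k R}

theorem mul_mem (hR : IsFullyGraded 𝒜) {x y : G} {a b : R} (ha : a ∈ 𝒜 x) (hb : b ∈ 𝒜 y) :
    a * b ∈ 𝒜 (x * y) :=
  hR.mul_eq x y ▸ Submodule.mul_mem_mul ha hb

theorem exists_sum_mul_eq_one (hR : IsFullyGraded 𝒜) (t : G) :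
    ∃ (n : ℕ) (u v : Fin n → R), (∀ i, u i ∈ 𝒜 t) ∧ (∀ i, v i ∈ 𝒜 t⁻¹) ∧
      ∑ i, u i * v i = 1 := by
  have h1 : (1 : R) ∈ 𝒜 t * 𝒜 t⁻¹ := by
    rw [hR.mul_eq, mul_inv_cancel]
    exact hR.one_mem
  refine Submodule.mul_induction_on h1 (fun a ha b hb => ⟨1, ![a], ![b], ?_⟩) ?_
  · simp [ha, hb]
  · rintro r r' ⟨n, u, v, hu, hv, rfl⟩ ⟨n', u', v', hu', hv', rfl⟩
    refine ⟨n + n', Fin.append u u', Fin.append v v', Fin.addCases (by simpa) (by simpa),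
      Fin.addCases (by simpa) (by simpa), ?_⟩
    rw [Fin.sum_univ_add]
    simp

theorem gradedPart_mul (hR : IsFullyGraded 𝒜) (S T : Set G) :
    gradedPart 𝒜 S * gradedPart 𝒜 T = gradedPart 𝒜 (S * T) := by
  refine le_antisymm (gradedPart_mul_le 𝒜 (fun x y => (hR.mul_eq x y).le) S T) (iSup_le ?_)
  rintro ⟨_, s, hs, t, ht, rfl⟩
  rw [← hR.mul_eq]
  exact mul_le_mul' (le_gradedPart 𝒜 hs) (le_gradedPart 𝒜 ht)

end IsFullyGraded

section BalancedTensor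

variable {A B : Submodule k R}

theorem mulTensor_eq_mulMap (A B : Submodule k R) : mulTensor A B = Submodule.mulMap A B :=
  TensorProduct.ext' fun _ _ => rfl

theorem mulQuot_mk (D : Submodule k R) (w : A ⊗[k] B) :
    mulQuot A B D (Submodule.Quotient.mk w) = mulTensor A B w :=
  rfl

theorem range_mulQuot (D : Submodule k R) : LinearMap.range (mulQuot A B D) = A * B := by
  rw [mulQuot, Submodule.range_liftQ, mulTensor_eq_mulMap, Submodule.mulMap_range]

theorem balancedTensor_mk_mul_tmul {D : Submodule k R} {a d b : R} (ha : a ∈ A) (hd : d ∈ D)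
    (hb : b ∈ B) (had : a * d ∈ A) (hdb : d * b ∈ B) :
    (Submodule.Quotient.mk ((⟨a * d, had⟩ : A) ⊗ₜ[k] (⟨b, hb⟩ : B)) : balancedTensor A B D) =
      Submodule.Quotient.mk ((⟨a, ha⟩ : A) ⊗ₜ[k] (⟨d * b, hdb⟩ : B)) :=
  (Submodule.Quotient.eq _).2 <|
    Submodule.subset_span ⟨⟨a, ha⟩, ⟨d, hd⟩, ⟨b, hb⟩, _, _, rfl, rfl, rfl⟩

-- `(… :)` elaborates `mkQ` before unifying with `balancedTensor`, whose quotient instance is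
-- given explicitly; elaborating it against the expected type takes minutes.
noncomputable def mkTmulMulLeft (D : Submodule k R) (u : A) (v : R) {X : Submodule k R}
    (hv : ∀ c ∈ X, v * c ∈ B) : X →ₗ[k] balancedTensor A B D :=
  (Submodule.mkQ (R := k) (M := A ⊗[k] B) (balancedRel A B D) :).comp <|
    (TensorProduct.mk k A B u).comp <|
      (LinearMap.mulLeft k v ∘ₗ X.subtype).codRestrict B fun c => hv c c.2

theorem mkTmulMulLeft_apply (D : Submodule k R) (u : A) (v : R) {X : Submodule k R}
    (hv : ∀ c ∈ X, v * c ∈ B) (c : X) :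
    mkTmulMulLeft D u v hv c = Submodule.Quotient.mk (u ⊗ₜ ⟨v * c, hv c c.2⟩) :=
  rfl

end BalancedTensor

section GradedParts

variable {𝒜 : G → Submodule k R} {SA SB SD : Set G}

theorem gradedPart_tensor_ext {M : Type*} [AddCommMonoid M] [Module k M]
    {f f' : gradedPart 𝒜 SA ⊗[k] gradedPart 𝒜 SB →ₗ[k] M}
    (h : ∀ s (hs : s ∈ SA) y (hy : y ∈ SB) a (ha : a ∈ 𝒜 s) b (hb : b ∈ 𝒜 y),
      f ((⟨a, le_gradedPart 𝒜 hs ha⟩ : gradedPart 𝒜 SA) ⊗ₜ ⟨b, le_gradedPart 𝒜 hy hb⟩) =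
        f' (⟨a, le_gradedPart 𝒜 hs ha⟩ ⊗ₜ ⟨b, le_gradedPart 𝒜 hy hb⟩)) :
    f = f' := by
  refine TensorProduct.ext' fun ⟨a, ha⟩ ⟨b, hb⟩ => ?_
  induction ha using Submodule.iSup_induction' with
  | mem s a ha =>
    induction hb using Submodule.iSup_induction' with
    | mem y b hb => exact h s s.2 y y.2 a ha b hb
    | zero =>
      rw [show (⟨0, zero_mem _⟩ : gradedPart 𝒜 SB) = 0 from rfl, TensorProduct.tmul_zero,
        map_zero, map_zero]
    | add b b' hb₀ hb₀' hb hb' =>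
      rw [show (⟨b + b', add_mem hb₀ hb₀'⟩ : gradedPart 𝒜 SB) = ⟨b, hb₀⟩ + ⟨b', hb₀'⟩ from rfl,
        TensorProduct.tmul_add, map_add, map_add, hb, hb']
  | zero =>
    rw [show (⟨0, zero_mem _⟩ : gradedPart 𝒜 SA) = 0 from rfl, TensorProduct.zero_tmul, map_zero,
      map_zero]
  | add a a' ha₀ ha₀' ha ha' =>
    rw [show (⟨a + a', add_mem ha₀ ha₀'⟩ : gradedPart 𝒜 SA) = ⟨a, ha₀⟩ + ⟨a', ha₀'⟩ from rfl,
      TensorProduct.add_tmul, map_add, map_add, ha, ha']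

theorem exists_linearMap_mk_tmul (hR : IsFullyGraded 𝒜)
    (hD : ∀ s ∈ SA, ∀ s' ∈ SA, ∀ y ∈ SB, ∀ y' ∈ SB, s * y = s' * y' → s'⁻¹ * s ∈ SD) (x : G) :
    ∃ φ : 𝒜 x →ₗ[k] balancedTensor (gradedPart 𝒜 SA) (gradedPart 𝒜 SB) (gradedPart 𝒜 SD),
      ∀ s (hs : s ∈ SA) y (hy : y ∈ SB), s * y = x →
        ∀ a (ha : a ∈ 𝒜 s) b (hb : b ∈ 𝒜 y) (c : 𝒜 x), (c : R) = a * b →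
          φ c = Submodule.Quotient.mk
            ((⟨a, le_gradedPart 𝒜 hs ha⟩ : gradedPart 𝒜 SA) ⊗ₜ ⟨b, le_gradedPart 𝒜 hy hb⟩) := by
  by_cases hx : x ∈ SA * SB
  swap
  · exact ⟨0, fun s hs y hy hsy => absurd (hsy ▸ Set.mul_mem_mul hs hy) hx⟩
  obtain ⟨t, ht, y₀, hy₀, rfl⟩ := Set.mem_mul.1 hx
  obtain ⟨n, u, v, hu, hv, huv⟩ := hR.exists_sum_mul_eq_one t
  have hvB : ∀ i, ∀ c ∈ 𝒜 (t * y₀), v i * c ∈ gradedPart 𝒜 SB := fun i c hc =>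
    le_gradedPart 𝒜 hy₀ (by simpa using hR.mul_mem (hv i) hc)
  refine ⟨∑ i, mkTmulMulLeft _ ⟨u i, le_gradedPart 𝒜 ht (hu i)⟩ (v i) (hvB i), ?_⟩
  rintro s hs y hy hsy a ha b hb ⟨c, hc⟩ rfl
  have hvD : ∀ i, v i * a ∈ gradedPart 𝒜 SD := fun i =>
    le_gradedPart 𝒜 (hD s hs t ht y hy y₀ hy₀ hsy) (hR.mul_mem (hv i) ha)
  have huvA : ∀ i, u i * (v i * a) ∈ gradedPart 𝒜 SA := fun i =>
    le_gradedPart 𝒜 hs (by simpa using hR.mul_mem (hu i) (hR.mul_mem (hv i) ha))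
  calc _ = ∑ i, Submodule.Quotient.mk
        ((⟨u i, le_gradedPart 𝒜 ht (hu i)⟩ : gradedPart 𝒜 SA) ⊗ₜ[k]
          (⟨v i * a * b, by simpa [mul_assoc] using hvB i _ hc⟩ : gradedPart 𝒜 SB)) := by
        simp only [LinearMap.sum_apply, mkTmulMulLeft_apply, mul_assoc]
    _ = ∑ i, Submodule.Quotient.mk
        ((⟨u i * (v i * a), huvA i⟩ : gradedPart 𝒜 SA) ⊗ₜ[k]
          (⟨b, le_gradedPart 𝒜 hy hb⟩ : gradedPart 𝒜 SB)) :=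
        Finset.sum_congr rfl fun i _ => (balancedTensor_mk_mul_tmul _ (hvD i) _ _ _).symm
    _ = Submodule.Quotient.mk ((∑ i, (⟨u i * (v i * a), huvA i⟩ : gradedPart 𝒜 SA)) ⊗ₜ[k]
          (⟨b, le_gradedPart 𝒜 hy hb⟩ : gradedPart 𝒜 SB)) := by
        simp only [TensorProduct.sum_tmul, ← Submodule.mkQ_apply, map_sum]
    _ = _ := by
        congr
        ext
        simp [← mul_assoc, ← Finset.sum_mul, huv]

theorem mulQuot_injective (hR : IsFullyGraded 𝒜)
    (hD : ∀ s ∈ SA, ∀ s' ∈ SA, ∀ y ∈ SB, ∀ y' ∈ SB, s * y = s' * y' → s'⁻¹ * s ∈ SD) :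
    Function.Injective (mulQuot (gradedPart 𝒜 SA) (gradedPart 𝒜 SB) (gradedPart 𝒜 SD)) := by
  choose φ hφ using exists_linearMap_mk_tmul hR hD
  obtain ⟨Ψ, hΨ⟩ := hR.internal.exists_linearMap_apply_coe φ
  have hΨ_mulQuot : Ψ ∘ₗ mulQuot _ _ _ = LinearMap.id := by
    refine Submodule.linearMap_qext _ (gradedPart_tensor_ext fun s hs y hy a ha b hb => ?_)
    simp only [LinearMap.comp_apply, Submodule.mkQ_apply, mulQuot_mk, mulTensor_tmul,
      LinearMap.id_apply]
    exact (hΨ (s * y) ⟨a * b, hR.mul_mem ha hb⟩).trans (hφ _ s hs y hy rfl a ha b hb _ rfl)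
  exact Function.LeftInverse.injective (g := Ψ) fun q => LinearMap.congr_fun hΨ_mulQuot q

end GradedParts

theorem inv_mul_mem_inf_conjSubgroup_of_mul_eq_mul {K H : Subgroup G} {g s s' y y' : G}
    (hs : s ∈ K) (hs' : s' ∈ K) (hy : y ∈ ({g} : Set G) * H) (hy' : y' ∈ ({g} : Set G) * H)
    (h : s * y = s' * y') : s'⁻¹ * s ∈ K ⊓ conjSubgroup g H := by
  rw [Set.singleton_mul] at hy hy'
  obtain ⟨z, hz, rfl⟩ := hy
  obtain ⟨z', hz', rfl⟩ := hy'
  refine Subgroup.mem_inf.2 ⟨K.mul_mem (K.inv_mem hs') hs, ?_⟩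
  have hs_eq : s = s' * (g * z') * (g * z)⁻¹ := eq_mul_inv_of_mul_eq h
  rw [mem_conjSubgroup, hs_eq, show g⁻¹ * (s'⁻¹ * (s' * (g * z') * (g * z)⁻¹)) * g = z' * z⁻¹ by
    group]
  exact H.mul_mem hz' (H.inv_mem hz)

theorem mulQuot_double_coset_bijective_general
    {𝒜 : G → Submodule k R} (hR : IsFullyGraded 𝒜) (K H : Subgroup G) (g : G) :
    Function.Injective (mulQuot (gradedPart 𝒜 (K : Set G))
      (gradedPart 𝒜 ({g} * (H : Set G)))
      (gradedPart 𝒜 ((K ⊓ conjSubgroup g H : Subgroup G) : Set G))) ∧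
    LinearMap.range (mulQuot (gradedPart 𝒜 (K : Set G))
        (gradedPart 𝒜 ({g} * (H : Set G)))
        (gradedPart 𝒜 ((K ⊓ conjSubgroup g H : Subgroup G) : Set G))) =
      gradedPart 𝒜 ((K : Set G) * {g} * (H : Set G)) := by
  refine ⟨mulQuot_injective hR fun _ hs _ hs' _ hy _ hy' =>
    inv_mul_mem_inf_conjSubgroup_of_mul_eq_mul hs hs' hy hy', ?_⟩
  rw [range_mulQuot, hR.gradedPart_mul, mul_assoc]

/-- Let `k` be a field, `G` a finite group, `R` a fully `G`-graded
`k`-algebra, `K, H ≤ G` and `g ∈ G`; write `ᵍH = g H g⁻¹`.  Then multiplication in `R`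
induces an isomorphism `R_K ⊗_{R_{[K ∩ ᵍH]}} R_{[gH]} ≅ R_{[KgH]}` of
`R_K`–`R_H`-bimodules, where `KgH = {t g z : t ∈ K, z ∈ H}`; in particular the `k`-linear
map `r₁ ⊗ r₂ ↦ r₁ r₂` on the balanced tensor product is injective with image exactly
`R_{[KgH]}`. -/
theorem mulQuot_double_coset_bijective [Finite G]
    {𝒜 : G → Submodule k R} (hR : IsFullyGraded 𝒜) (K H : Subgroup G) (g : G) :
    Function.Injective (mulQuot (gradedPart 𝒜 (K : Set G))
      (gradedPart 𝒜 ({g} * (H : Set G)))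
      (gradedPart 𝒜 ((K ⊓ conjSubgroup g H : Subgroup G) : Set G))) ∧
    LinearMap.range (mulQuot (gradedPart 𝒜 (K : Set G))
        (gradedPart 𝒜 ({g} * (H : Set G)))
        (gradedPart 𝒜 ((K ⊓ conjSubgroup g H : Subgroup G) : Set G))) =
      gradedPart 𝒜 ((K : Set G) * {g} * (H : Set G)) :=
  mulQuot_double_coset_bijective_general hR K H g
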